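/- arXiv:math/9604223 — 3 statements merged into one kernel-verified Lean document; each statement's English description precedes it below -/
import Mathlib

section
/- Cocycle lemma from the proof of Lemma (2.1): Let U ⊆ ℂ^m be a connected open set, let t ≥ 1, let S ⊆ ℤ^t be a finite nonempty set, and for each L ∈ S let a_L : U → ℂ be holomorphic. Define h(y,z) = Σ_{L∈S} a_L(y)·z^L for (y,z) ∈ U × (ℂ∖{0})^t, where z^L = z₁^{L₁}⋯z_t^{L_t}. If h(y,z) ≠ 0 for all (y,z) ∈ U × (ℂ∖{0})^t, then there exist a unique ℓ ∈ ℤ^t and a unique nowhere-vanishing holomorphic function a : U → ℂ such that h(y,z) = a(y)·z^ℓ for all (y,z) ∈ U × (ℂ∖{0})^t. -/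
open Polynomial in
lemma poly_monomial_aux (p : ℂ[X]) (hp : ∀ w : ℂ, w ≠ 0 → p.eval w ≠ 0) :
    ∃ c n, p = C c * X ^ n := by
  rcases eq_or_ne p 0 with rfl | hp0
  · refine ⟨0, 0, by simp⟩
  obtain ⟨q, hq, hqnd⟩ := p.exists_eq_pow_rootMultiplicity_mul_and_not_dvd hp0 0
  have hq0 : q.eval 0 ≠ 0 := by
    intro h
    exact hqnd (by simpa using (dvd_iff_isRoot (p := q) (a := (0:ℂ))).2 h)
  have hqne : ∀ w : ℂ, q.eval w ≠ 0 := by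
    intro w
    rcases eq_or_ne w 0 with rfl | hw
    · exact hq0
    · intro h
      apply hp w hw
      rw [hq]
      simp [h]
  have hdeg : q.degree ≤ 0 := by
    by_contra hd
    push_neg at hd
    obtain ⟨x, hx⟩ := Complex.isAlgClosed.exists_root q (by
      intro h0; rw [h0] at hd; exact absurd hd (by norm_num))
    exact hqne x hx
  obtain ⟨c, rfl⟩ : ∃ c, q = C c := ⟨q.coeff 0, (eq_C_of_degree_le_zero hdeg)⟩
  refine ⟨c, p.rootMultiplicity 0, ?_⟩
  conv_lhs => rw [hq]
  rw [map_zero, sub_zero, mul_comm]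

open Polynomial in
lemma laurent_single (K : Finset ℤ) (c : ℤ → ℂ)
    (h : ∀ w : ℂ, w ≠ 0 → (∑ k ∈ K, c k * w ^ k) ≠ 0) :
    ∀ k1 ∈ K, ∀ k2 ∈ K, c k1 ≠ 0 → c k2 ≠ 0 → k1 = k2 := by
  intro k1 hk1 k2 hk2 hc1 hc2
  set N : ℤ := ((K.sup fun k => (-k).toNat : ℕ) : ℤ) with hN
  have hnn : ∀ k ∈ K, 0 ≤ k + N := by
    intro k hk
    have h1 : ((-k).toNat : ℤ) ≤ N := by
      rw [hN]
      exact_mod_cast Finset.le_sup (f := fun k => (-k).toNat) hk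
    have h2 : -k ≤ ((-k).toNat : ℤ) := Int.self_le_toNat _
    linarith
  set e : ℤ → ℕ := fun k => (k + N).toNat with he
  have hecast : ∀ k ∈ K, ((e k : ℤ)) = k + N := fun k hk => Int.toNat_of_nonneg (hnn k hk)
  have heinj : ∀ k ∈ K, ∀ k' ∈ K, e k = e k' → k = k' := by
    intro k hk k' hk' hkk'
    have := congrArg (fun n : ℕ => (n : ℤ)) hkk'
    simp only [hecast k hk, hecast k' hk'] at this
    linarith
  set p : ℂ[X] := ∑ k ∈ K, C (c k) * X ^ e k with hp
  have hpeval : ∀ w : ℂ, w ≠ 0 → p.eval w ≠ 0 := by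
    intro w hw
    have : p.eval w = (∑ k ∈ K, c k * w ^ k) * w ^ N := by
      rw [hp]
      simp only [eval_finset_sum, eval_mul, eval_C, eval_pow, eval_X, Finset.sum_mul]
      refine Finset.sum_congr rfl fun k hk => ?_
      rw [mul_assoc, ← zpow_add₀ hw, ← zpow_natCast w (e k), hecast k hk]
    rw [this]
    exact mul_ne_zero (h w hw) (zpow_ne_zero _ hw)
  obtain ⟨a, n, hmon⟩ := poly_monomial_aux p hpeval
  have hcoeff : ∀ k ∈ K, c k ≠ 0 → e k = n := by
    intro k hk hck
    have h1 : p.coeff (e k) = c k := by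
      rw [hp, finset_sum_coeff]
      rw [Finset.sum_eq_single k]
      · simp [coeff_X_pow]
      · intro k' hk' hne
        have : e k' ≠ e k := fun hh => hne (heinj k' hk' k hk hh)
        simp [coeff_X_pow, Ne.symm this]
      · intro hkk; exact absurd hk hkk
    have h2 : p.coeff (e k) = if e k = n then a else 0 := by
      rw [hmon, coeff_C_mul, coeff_X_pow]
      simp [eq_comm]
    by_contra hne
    rw [h1, if_neg hne] at h2
    exact hck h2
  exact heinj k1 hk1 k2 hk2 ((hcoeff k1 hk1 hc1).trans (hcoeff k2 hk2 hc2).symm)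

lemma digits_zero_aux : ∀ (t : ℕ) (M : ℤ) (d : Fin t → ℤ),
    (∀ i, 2 * |d i| < M) → (∑ i, d i * M ^ (i : ℕ)) = 0 → ∀ i, d i = 0 := by
  intro t
  induction t with
  | zero => intro M d _ _ i; exact i.elim0
  | succ t ih =>
    intro M d hd hsum i
    have hM : 0 < M := lt_of_le_of_lt (by positivity) (hd 0)
    rw [Fin.sum_univ_succ] at hsum
    have h2 : ∀ i : Fin t, d i.succ * M ^ ((i.succ : Fin (t+1)) : ℕ)
        = M * (d i.succ * M ^ (i : ℕ)) := by
      intro i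
      have hval : ((i.succ : Fin (t+1)) : ℕ) = (i : ℕ) + 1 := rfl
      rw [hval, pow_succ]; ring
    rw [Finset.sum_congr rfl (fun i _ => h2 i), ← Finset.mul_sum] at hsum
    rw [show (((0: Fin (t+1))) : ℕ) = 0 from rfl, pow_zero, mul_one] at hsum
    set T := ∑ i : Fin t, d i.succ * M ^ (i : ℕ) with hT
    have hd0 : d 0 = 0 := by
      have hdvd : M ∣ d 0 := ⟨-T, by linarith [hsum]⟩
      refine Int.eq_zero_of_abs_lt_dvd hdvd ?_
      have := hd 0
      have habs : 0 ≤ |d 0| := abs_nonneg _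
      linarith
    have hTz : T = 0 := by
      have : M * T = 0 := by simpa [hd0] using hsum
      rcases mul_eq_zero.1 this with h | h
      · exact absurd h (by positivity)
      · exact h
    have hrest := ih M (fun i => d i.succ) (fun i => hd i.succ) hTz
    rcases i.eq_zero_or_eq_succ with h | ⟨j, hj⟩
    · rw [h]; exact hd0
    · rw [hj]; exact hrest j

lemma zpow_finset_sum {ι : Type*} (w : ℂ) (hw : w ≠ 0) (s : Finset ι) (f : ι → ℤ) :
    w ^ (∑ i ∈ s, f i) = ∏ i ∈ s, w ^ f i := by
  classical
  induction s using Finset.induction_on with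
  | empty => simp
  | insert _ _ hx ih =>
    rw [Finset.sum_insert hx, Finset.prod_insert hx, zpow_add₀ hw, ih]

/-- Cocycle lemma from the proof of Lemma (2.1): a finite Laurent series in
`z ∈ (ℂ∖{0})^t` with coefficients holomorphic on a connected open set `U ⊆ ℂ^m`,
which vanishes nowhere on `U × (ℂ∖{0})^t`, is of the form `a(y)·z^ℓ` for a unique
exponent `ℓ ∈ ℤ^t` and a unique nowhere-vanishing holomorphic function `a` on `U`. -/
theorem cocycle_lemma
    (m t : ℕ) (ht : 1 ≤ t)
    (U : Set (Fin m → ℂ)) (hUopen : IsOpen U) (hUconn : IsConnected U)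
    (S : Finset (Fin t → ℤ)) (hS : S.Nonempty)
    (aL : (Fin t → ℤ) → (Fin m → ℂ) → ℂ)
    (haL : ∀ L ∈ S, DifferentiableOn ℂ (aL L) U)
    (hne : ∀ y ∈ U, ∀ z : Fin t → ℂ, (∀ i, z i ≠ 0) →
      (∑ L ∈ S, aL L y * ∏ i, z i ^ L i) ≠ 0) :
    ∃ (ℓ : Fin t → ℤ) (a : (Fin m → ℂ) → ℂ),
      DifferentiableOn ℂ a U ∧
      (∀ y ∈ U, a y ≠ 0) ∧
      (∀ y ∈ U, ∀ z : Fin t → ℂ, (∀ i, z i ≠ 0) →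
        (∑ L ∈ S, aL L y * ∏ i, z i ^ L i) = a y * ∏ i, z i ^ ℓ i) ∧
      (∀ (ℓ' : Fin t → ℤ) (a' : (Fin m → ℂ) → ℂ),
        (∀ y ∈ U, ∀ z : Fin t → ℂ, (∀ i, z i ≠ 0) →
          (∑ L ∈ S, aL L y * ∏ i, z i ^ L i) = a' y * ∏ i, z i ^ ℓ' i) →
        ℓ' = ℓ ∧ ∀ y ∈ U, a' y = a y) := by
  classical
  obtain ⟨y0, hy0⟩ := hUconn.nonempty
  set B : ℕ := S.sup fun L => Finset.univ.sup fun i => (L i).natAbs with hB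
  set M : ℕ := 4 * B + 1 with hM
  have hbound : ∀ L ∈ S, ∀ i, |L i| ≤ (B : ℤ) := by
    intro L hL i
    have h1 : (L i).natAbs ≤ Finset.univ.sup fun i => (L i).natAbs :=
      Finset.le_sup (f := fun i => (L i).natAbs) (Finset.mem_univ i)
    have h2 : (Finset.univ.sup fun i => (L i).natAbs) ≤ B :=
      Finset.le_sup (f := fun L => Finset.univ.sup fun i => (L i).natAbs) hL
    rw [Int.abs_eq_natAbs]
    exact_mod_cast h1.trans h2
  set φ : (Fin t → ℤ) → ℤ := fun L => ∑ i, L i * (M : ℤ) ^ (i : ℕ) with hφ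
  have hinj : ∀ L ∈ S, ∀ L' ∈ S, φ L = φ L' → L = L' := by
    intro L hL L' hL' hLL'
    have hz := digits_zero_aux t (M : ℤ) (fun i => L i - L' i)
      (by
        intro i
        have b1 := hbound L hL i
        have b2 := hbound L' hL' i
        have : |L i - L' i| ≤ |L i| + |L' i| := abs_sub _ _
        have hMc : ((M : ℤ)) = 4 * (B : ℤ) + 1 := by rw [hM]; push_cast; ring
        rw [hMc]; linarith)
      (by
        have : ∑ i, (L i - L' i) * (M : ℤ) ^ (i : ℕ)
            = (∑ i, L i * (M : ℤ) ^ (i : ℕ)) - ∑ i, L' i * (M : ℤ) ^ (i : ℕ) := by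
          rw [← Finset.sum_sub_distrib]
          exact Finset.sum_congr rfl fun i _ => by ring
        rw [this, hφ] at *
        simpa [sub_eq_zero] using hLL')
    funext i
    have hzi : L i - L' i = 0 := hz i
    linarith
  -- at most one nonvanishing coefficient at each point
  have key : ∀ y ∈ U, ∀ L1 ∈ S, ∀ L2 ∈ S, aL L1 y ≠ 0 → aL L2 y ≠ 0 → L1 = L2 := by
    intro y hy L1 hL1 L2 hL2 h1 h2
    set c : ℤ → ℂ := fun k => ∑ L ∈ S.filter (fun L => φ L = k), aL L y with hc
    have hfib : ∀ L ∈ S, S.filter (fun L' => φ L' = φ L) = {L} := by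
      intro L hL
      ext L'
      simp only [Finset.mem_filter, Finset.mem_singleton]
      constructor
      · rintro ⟨hL', heq⟩; exact hinj L' hL' L hL heq
      · rintro rfl; exact ⟨hL, rfl⟩
    have hcL : ∀ L ∈ S, c (φ L) = aL L y := by
      intro L hL
      rw [hc]
      simp [hfib L hL]
    have hlaurent : ∀ w : ℂ, w ≠ 0 → (∑ k ∈ S.image φ, c k * w ^ k) ≠ 0 := by
      intro w hw
      have hz : ∀ i : Fin t, (w ^ (M ^ (i : ℕ)) : ℂ) ≠ 0 := fun i => pow_ne_zero _ hw
      have happ := hne y hy (fun i => w ^ (M ^ (i : ℕ))) hz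
      have hterm : ∀ L : Fin t → ℤ, (∏ i : Fin t, (w ^ (M ^ (i : ℕ))) ^ (L i)) = w ^ (φ L) := by
        intro L
        have hstep : ∀ i : Fin t, (w ^ (M ^ (i : ℕ)) : ℂ) ^ (L i)
            = w ^ (L i * (M : ℤ) ^ (i : ℕ)) := by
          intro i
          rw [← zpow_natCast w (M ^ (i : ℕ))]
          rw [← zpow_mul]
          congr 1
          push_cast
          ring
        rw [Finset.prod_congr rfl (fun i _ => hstep i), hφ, zpow_finset_sum w hw]
      have hre : ∑ k ∈ S.image φ, c k * w ^ k = ∑ L ∈ S, aL L y * w ^ (φ L) := by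
        rw [hc]
        rw [← Finset.sum_fiberwise_of_maps_to (fun L hL => Finset.mem_image_of_mem φ hL)
          (fun L => aL L y * w ^ (φ L))]
        refine Finset.sum_congr rfl fun k hk => ?_
        rw [Finset.sum_mul]
        refine Finset.sum_congr rfl fun L hL => ?_
        rw [(Finset.mem_filter.1 hL).2]
      rw [hre]
      have : ∀ L ∈ S, aL L y * w ^ (φ L) = aL L y * ∏ i : Fin t, (w ^ (M ^ (i : ℕ))) ^ (L i) :=
        fun L _ => by rw [hterm L]
      rw [Finset.sum_congr rfl this]
      exact happ
    have hφ1 := laurent_single (S.image φ) c hlaurent (φ L1) (Finset.mem_image_of_mem φ hL1)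
      (φ L2) (Finset.mem_image_of_mem φ hL2)
      (by rw [hcL L1 hL1]; exact h1) (by rw [hcL L2 hL2]; exact h2)
    exact hinj L1 hL1 L2 hL2 hφ1
  -- at least one nonvanishing coefficient at each point
  have exists_nonzero : ∀ y ∈ U, ∃ L ∈ S, aL L y ≠ 0 := by
    intro y hy
    have h1 := hne y hy (fun _ => 1) (fun _ => one_ne_zero)
    simp only [one_zpow, Finset.prod_const_one, mul_one] at h1
    by_contra hcon
    push_neg at hcon
    exact h1 (Finset.sum_eq_zero hcon)
  obtain ⟨L0, hL0S, hL0y0⟩ := exists_nonzero y0 hy0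
  -- connectedness: aL L0 never vanishes on U
  have hA : ∀ y ∈ U, aL L0 y ≠ 0 := by
    by_contra hcon
    push_neg at hcon
    obtain ⟨y1, hy1, hy1z⟩ := hcon
    set V : (Fin t → ℤ) → Set (Fin m → ℂ) := fun L => U ∩ (aL L) ⁻¹' {0}ᶜ with hV
    have hVopen : ∀ L ∈ S, IsOpen (V L) := fun L hL =>
      ContinuousOn.isOpen_inter_preimage ((haL L hL).continuousOn) hUopen
        isOpen_compl_singleton
    have hmemV : ∀ L y, y ∈ V L ↔ y ∈ U ∧ aL L y ≠ 0 := by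
      intro L y
      simp [hV]
    set Bs : Set (Fin m → ℂ) := ⋃ L ∈ (S.erase L0 : Finset (Fin t → ℤ)), V L with hBs
    have hBopen : IsOpen Bs :=
      isOpen_biUnion fun L hL => hVopen L (Finset.mem_of_mem_erase hL)
    have hcover : U ⊆ V L0 ∪ Bs := by
      intro y hy
      obtain ⟨L, hLS, hLne⟩ := exists_nonzero y hy
      rcases eq_or_ne L L0 with rfl | hLL0
      · exact Or.inl ((hmemV L y).2 ⟨hy, hLne⟩)
      · exact Or.inr (Set.mem_biUnion (Finset.mem_erase.2 ⟨hLL0, hLS⟩)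
          ((hmemV L y).2 ⟨hy, hLne⟩))
    have h1 : (U ∩ V L0).Nonempty := ⟨y0, hy0, (hmemV L0 y0).2 ⟨hy0, hL0y0⟩⟩
    have h2 : (U ∩ Bs).Nonempty := by
      obtain ⟨L1, hL1S, hL1ne⟩ := exists_nonzero y1 hy1
      have hL1L0 : L1 ≠ L0 := fun h => hL1ne (h ▸ hy1z)
      exact ⟨y1, hy1, Set.mem_biUnion (Finset.mem_erase.2 ⟨hL1L0, hL1S⟩)
        ((hmemV L1 y1).2 ⟨hy1, hL1ne⟩)⟩
    obtain ⟨y2, hy2U, hy2A, hy2B⟩ :=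
      hUconn.isPreconnected (V L0) Bs (hVopen L0 hL0S) hBopen hcover h1 h2
    obtain ⟨L', hL'mem, hy2V⟩ := Set.mem_iUnion₂.1 hy2B
    have hL'ne : aL L' y2 ≠ 0 := ((hmemV L' y2).1 hy2V).2
    have hL0ne : aL L0 y2 ≠ 0 := ((hmemV L0 y2).1 hy2A).2
    exact (Finset.mem_erase.1 hL'mem).1
      (key y2 hy2U L' (Finset.mem_of_mem_erase hL'mem) L0 hL0S hL'ne hL0ne)
  have hzero : ∀ L ∈ S, L ≠ L0 → ∀ y ∈ U, aL L y = 0 := by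
    intro L hL hne' y hy
    by_contra h
    exact hne' (key y hy L hL L0 hL0S h (hA y hy))
  have hsum : ∀ y ∈ U, ∀ z : Fin t → ℂ, (∀ i, z i ≠ 0) →
      (∑ L ∈ S, aL L y * ∏ i, z i ^ L i) = aL L0 y * ∏ i, z i ^ L0 i := by
    intro y hy z _
    refine Finset.sum_eq_single_of_mem L0 hL0S ?_
    intro L hL hne'
    rw [hzero L hL hne' y hy, zero_mul]
  refine ⟨L0, aL L0, haL L0 hL0S, hA, hsum, ?_⟩
  intro ℓ' a' hid
  have ha' : ∀ y ∈ U, a' y = aL L0 y := by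
    intro y hy
    have h1 := hid y hy (fun _ => 1) (fun _ => one_ne_zero)
    have h2 := hsum y hy (fun _ => 1) (fun _ => one_ne_zero)
    simp only [one_zpow, Finset.prod_const_one, mul_one] at h1 h2
    rw [← h1, h2]
  refine ⟨?_, ha'⟩
  funext i
  set z : Fin t → ℂ := fun j => if j = i then 2 else 1 with hzdef
  have hz : ∀ j, z j ≠ 0 := by
    intro j
    rw [hzdef]
    dsimp only
    split <;> norm_num
  have hprod : ∀ ℓ'' : Fin t → ℤ, (∏ j, z j ^ ℓ'' j) = (2 : ℂ) ^ (ℓ'' i) := by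
    intro ℓ''
    rw [Finset.prod_eq_single i]
    · rw [hzdef]; dsimp only; rw [if_pos rfl]
    · intro j _ hji
      rw [hzdef]; dsimp only; rw [if_neg hji, one_zpow]
    · intro h; exact absurd (Finset.mem_univ i) h
  have h1 := hid y0 hy0 z hz
  have h2 := hsum y0 hy0 z hz
  rw [hprod, ha' y0 hy0] at h1
  rw [hprod] at h2
  rw [h1] at h2
  have h3 : (2 : ℂ) ^ (ℓ' i) = (2 : ℂ) ^ (L0 i) := mul_left_cancel₀ hL0y0 h2
  have h4 : ((2 : ℝ)) ^ (ℓ' i) = ((2 : ℝ)) ^ (L0 i) := by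
    have := congrArg (fun x : ℂ => ‖x‖) h3
    rwa [norm_zpow, norm_zpow, Complex.norm_two] at this
  exact zpow_right_injective₀ (by norm_num : (0:ℝ) < 2) (by norm_num) h4
end

section
/- Theorem (3.1) for algebraic tori (algebraicity of the exceptional set): Let P be a Laurent polynomial map on (ℂ∖{0})ⁿ with zero set D, and define E = { a ∈ (ℂ∖{0})ⁿ : P(a) ≠ 0 and there exists m ∈ ℤⁿ∖{0} with P(a₁t^{m₁},…,aₙt^{mₙ}) ≠ 0 for all t ∈ ℂ∖{0} }, i.e., E is the union of all translates of positive-dimensional subtori of (ℂ∖{0})ⁿ that do not meet D. Then E is an algebraic subset of the complement of D: there exist finitely many Laurent polynomial maps Q₁,…,Q_r on (ℂ∖{0})ⁿ such that E = { a ∈ (ℂ∖{0})ⁿ : P(a) ≠ 0 and Q₁(a) = ⋯ = Q_r(a) = 0 }. -/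
open Polynomial Finset

lemma poly_no_nonzero_root (p : Polynomial ℂ) (hp : p ≠ 0)
    (h : ∀ z : ℂ, z ≠ 0 → p.eval z ≠ 0) :
    p = Polynomial.C p.leadingCoeff * Polynomial.X ^ p.natDegree := by
  have hsplit : p.roots.card = p.natDegree :=
    (Polynomial.splits_iff_card_roots).1 (IsAlgClosed.splits p)
  have hroots : p.roots = Multiset.replicate p.natDegree 0 := by
    rw [Multiset.eq_replicate]
    refine ⟨hsplit, fun b hb => ?_⟩
    by_contra hb0
    exact h b hb0 ((Polynomial.mem_roots hp).1 hb)
  have h2 := Polynomial.C_leadingCoeff_mul_prod_multiset_X_sub_C (p := p) hsplit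
  rw [hroots] at h2
  simpa [Multiset.map_replicate, Multiset.prod_replicate] using h2.symm

lemma zpow_sum' {ι : Type*} (t : ℂ) (ht : t ≠ 0) (s : Finset ι) (f : ι → ℤ) :
    t ^ (∑ i ∈ s, f i) = ∏ i ∈ s, t ^ f i := by
  classical
  induction s using Finset.induction with
  | empty => simp
  | insert _ _ h ih => rw [Finset.sum_insert h, Finset.prod_insert h, zpow_add₀ ht, ih]

lemma laurent_one_var (V : Finset ℤ) (g : ℤ → ℂ) (hsum : (∑ v ∈ V, g v) ≠ 0) :
    (∀ t : ℂ, t ≠ 0 → (∑ v ∈ V, g v * t ^ v) ≠ 0) ↔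
      ∃ v₀ ∈ V, ∀ v ∈ V, v ≠ v₀ → g v = 0 := by
  classical
  have hV : V.Nonempty := by
    rcases V.eq_empty_or_nonempty with h | h
    · simp [h] at hsum
    · exact h
  constructor
  · intro h
    set μ := V.min' hV with hμ
    set e : ℤ → ℕ := fun v => (v - μ).toNat with he
    have hinj : ∀ v ∈ V, ∀ w ∈ V, e v = e w → v = w := by
      intro v hv w hw hvw
      have h1 : (0:ℤ) ≤ v - μ := sub_nonneg.2 (V.min'_le v hv)
      have h2 : (0:ℤ) ≤ w - μ := sub_nonneg.2 (V.min'_le w hw)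
      have : v - μ = w - μ := by
        have := congrArg (Int.ofNat) hvw
        simpa [he, Int.toNat_of_nonneg h1, Int.toNat_of_nonneg h2] using this
      linarith
    set p : Polynomial ℂ := ∑ v ∈ V, Polynomial.C (g v) * Polynomial.X ^ (e v) with hpdef
    have heval : ∀ t : ℂ, p.eval t = ∑ v ∈ V, g v * t ^ (e v) := by
      intro t; simp [hpdef, Polynomial.eval_finset_sum]
    have hfact : ∀ t : ℂ, t ≠ 0 → (∑ v ∈ V, g v * t ^ v) = t ^ μ * p.eval t := by
      intro t ht
      rw [heval, Finset.mul_sum]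
      refine Finset.sum_congr rfl fun v hv => ?_
      have h1 : (0:ℤ) ≤ v - μ := sub_nonneg.2 (V.min'_le v hv)
      have : t ^ v = t ^ μ * t ^ (e v : ℤ) := by
        rw [← zpow_add₀ ht]
        congr 1
        simp [he, Int.toNat_of_nonneg h1]
      rw [this, zpow_natCast]; ring
    have hp1 : p.eval 1 = ∑ v ∈ V, g v := by simp [heval]
    have hp0 : p ≠ 0 := by
      intro h0; rw [h0] at hp1; simp at hp1; exact hsum hp1.symm
    have hnr : ∀ z : ℂ, z ≠ 0 → p.eval z ≠ 0 := by
      intro z hz hez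
      exact h z hz (by rw [hfact z hz, hez, mul_zero])
    have hmono := poly_no_nonzero_root p hp0 hnr
    have hcoeff : ∀ v ∈ V, p.coeff (e v) = g v := by
      intro v hv
      rw [hpdef, Polynomial.finset_sum_coeff]
      rw [Finset.sum_eq_single v]
      · simp
      · intro w hw hwv
        have hne : e v ≠ e w := fun hh => hwv (hinj w hw v hv hh.symm)
        simp [Polynomial.coeff_C_mul, Polynomial.coeff_X_pow, hne]
      · intro hv'; exact absurd hv hv'
    by_cases hex : ∃ v₀ ∈ V, e v₀ = p.natDegree
    · obtain ⟨v₀, hv₀, hev₀⟩ := hex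
      refine ⟨v₀, hv₀, fun v hv hne => ?_⟩
      have : e v ≠ p.natDegree := by
        intro hh; exact hne (hinj v hv v₀ hv₀ (by rw [hh, hev₀]))
      have hc := hcoeff v hv
      rw [hmono, Polynomial.coeff_C_mul, Polynomial.coeff_X_pow,
        if_neg this, mul_zero] at hc
      exact hc.symm
    · exfalso
      apply hsum
      refine Finset.sum_eq_zero fun v hv => ?_
      have : e v ≠ p.natDegree := fun hh => hex ⟨v, hv, hh⟩
      have hc := hcoeff v hv
      rw [hmono, Polynomial.coeff_C_mul, Polynomial.coeff_X_pow,
        if_neg this, mul_zero] at hc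
      exact hc.symm
  · rintro ⟨v₀, hv₀, hz⟩ t ht
    have h1 : (∑ v ∈ V, g v * t ^ v) = g v₀ * t ^ v₀ := by
      rw [Finset.sum_eq_single v₀]
      · intro w hw hwv; rw [hz w hw hwv, zero_mul]
      · intro h; exact absurd hv₀ h
    have h2 : (∑ v ∈ V, g v) = g v₀ := by
      rw [Finset.sum_eq_single v₀]
      · intro w hw hwv; exact hz w hw hwv
      · intro h; exact absurd hv₀ h
    rw [h1]
    exact mul_ne_zero (h2 ▸ hsum) (zpow_ne_zero _ ht)

open Finset

noncomputable section

abbrev LPoly (n : ℕ) := AddMonoidAlgebra ℂ (Fin n → ℤ)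

def evChar {n : ℕ} (a : Fin n → ℂ) (ha : ∀ i, a i ≠ 0) :
    Multiplicative (Fin n → ℤ) →* ℂ where
  toFun L := ∏ i, a i ^ (Multiplicative.toAdd L i)
  map_one' := by simp
  map_mul' x y := by
    simp only [toAdd_mul, Pi.add_apply]
    rw [← Finset.prod_mul_distrib]
    exact Finset.prod_congr rfl fun i _ => zpow_add₀ (ha i) _ _

def ev {n : ℕ} (a : Fin n → ℂ) (ha : ∀ i, a i ≠ 0) : LPoly n →ₐ[ℂ] ℂ :=
  AddMonoidAlgebra.lift ℂ ℂ _ (evChar a ha)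

lemma ev_single {n : ℕ} (a : Fin n → ℂ) (ha : ∀ i, a i ≠ 0)
    (L : Fin n → ℤ) (b : ℂ) :
    ev a ha (AddMonoidAlgebra.single L b) = b * ∏ i, a i ^ (L i) := by
  rw [ev, AddMonoidAlgebra.lift_single]
  rfl

lemma ev_apply {n : ℕ} (a : Fin n → ℂ) (ha : ∀ i, a i ≠ 0) (q : LPoly n) :
    ev a ha q = ∑ L ∈ q.coeff.support, q.coeff L * ∏ i, a i ^ (L i) := by
  rw [ev, AddMonoidAlgebra.lift_apply]
  rfl

def blockPoly {n : ℕ} (c : (Fin n → ℤ) → ℂ) (B : Finset (Fin n → ℤ)) : LPoly n :=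
  ∑ L ∈ B, AddMonoidAlgebra.single L (c L)

lemma ev_blockPoly {n : ℕ} (a : Fin n → ℂ) (ha : ∀ i, a i ≠ 0)
    (c : (Fin n → ℤ) → ℂ) (B : Finset (Fin n → ℤ)) :
    ev a ha (blockPoly c B) = ∑ L ∈ B, c L * ∏ i, a i ^ (L i) := by
  rw [blockPoly, map_sum]
  exact Finset.sum_congr rfl fun L _ => ev_single a ha L (c L)

lemma blockPoly_apply {n : ℕ} (c : (Fin n → ℤ) → ℂ) (B : Finset (Fin n → ℤ))
    (L₀ : Fin n → ℤ) (hL₀ : L₀ ∈ B) : (blockPoly c B).coeff L₀ = c L₀ := by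
  classical
  rw [blockPoly, AddMonoidAlgebra.coeff_sum, Finset.sum_apply']
  rw [Finset.sum_eq_single L₀]
  · simp [AddMonoidAlgebra.coeff_single]
  · intro b hb hbL; simp [AddMonoidAlgebra.coeff_single, Finsupp.single_apply, hbL]
  · intro h; exact absurd hL₀ h

lemma blockPoly_ne_zero {n : ℕ} (c : (Fin n → ℤ) → ℂ) (B : Finset (Fin n → ℤ))
    (hB : B.Nonempty) (hc : ∀ L ∈ B, c L ≠ 0) : blockPoly c B ≠ 0 := by
  obtain ⟨L₀, hL₀⟩ := hB
  intro h0
  have := blockPoly_apply c B L₀ hL₀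
  rw [h0] at this
  exact hc L₀ hL₀ this.symm

end

noncomputable section

variable {n : ℕ}

def dotm (m : Fin n → ℤ) (L : Fin n → ℤ) : ℤ := ∑ i, m i * L i

def fiber (S : Finset (Fin n → ℤ)) (m : Fin n → ℤ) (v : ℤ) : Finset (Fin n → ℤ) :=
  S.filter (fun L => dotm m L = v)

def fibers (S : Finset (Fin n → ℤ)) (m : Fin n → ℤ) : Finset (Finset (Fin n → ℤ)) :=
  (S.image (dotm m)).image (fiber S m)

lemma fibers_sub_nonempty (S : Finset (Fin n → ℤ)) (m : Fin n → ℤ) :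
    ∀ B ∈ fibers S m, B.Nonempty ∧ B ⊆ S := by
  intro B hB
  rw [fibers, Finset.mem_image] at hB
  obtain ⟨v, hv, rfl⟩ := hB
  rw [Finset.mem_image] at hv
  obtain ⟨L, hL, rfl⟩ := hv
  exact ⟨⟨L, Finset.mem_filter.2 ⟨hL, rfl⟩⟩, Finset.filter_subset _ _⟩

/-- Key per-direction lemma. -/
lemma lemA (S : Finset (Fin n → ℤ)) (c : (Fin n → ℤ) → ℂ)
    (a : Fin n → ℂ) (ha : ∀ i, a i ≠ 0)
    (hP : (∑ L ∈ S, c L * ∏ i, a i ^ L i) ≠ 0) (m : Fin n → ℤ) :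
    (∀ t : ℂ, t ≠ 0 → (∑ L ∈ S, c L * ∏ i, (a i * t ^ m i) ^ L i) ≠ 0) ↔
      ∃ B ∈ fibers S m, ∀ B' ∈ fibers S m, B' ≠ B →
        ev a ha (blockPoly c B') = 0 := by
  classical
  set V := S.image (dotm m) with hV
  set g : ℤ → ℂ := fun v => ∑ L ∈ fiber S m v, c L * ∏ i, a i ^ L i with hg
  have hsum : (∑ v ∈ V, g v) = ∑ L ∈ S, c L * ∏ i, a i ^ L i := by
    exact Finset.sum_fiberwise_of_maps_to (fun L hL => Finset.mem_image_of_mem _ hL) _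
  have hterm : ∀ (t : ℂ), t ≠ 0 → ∀ L, (c L * ∏ i, (a i * t ^ m i) ^ L i)
      = (c L * ∏ i, a i ^ L i) * t ^ (dotm m L) := by
    intro t ht L
    have : ∀ i, (a i * t ^ m i) ^ L i = a i ^ L i * t ^ (m i * L i) := by
      intro i
      rw [mul_zpow, ← zpow_mul]
    rw [Finset.prod_congr rfl fun i _ => this i, Finset.prod_mul_distrib,
      ← zpow_sum' t ht, dotm]
    ring
  have hre : ∀ (t : ℂ), t ≠ 0 →
      (∑ L ∈ S, c L * ∏ i, (a i * t ^ m i) ^ L i) = ∑ v ∈ V, g v * t ^ v := by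
    intro t ht
    rw [Finset.sum_congr rfl fun L _ => hterm t ht L]
    rw [← Finset.sum_fiberwise_of_maps_to (g := dotm m)
      (fun L hL => Finset.mem_image_of_mem _ hL)
      (fun L => (c L * ∏ i, a i ^ L i) * t ^ (dotm m L))]
    refine Finset.sum_congr rfl fun v hv => ?_
    rw [hg, Finset.sum_mul, fiber]
    refine Finset.sum_congr rfl fun L hL => ?_
    rw [(Finset.mem_filter.1 hL).2]
  have key : (∀ t : ℂ, t ≠ 0 → (∑ L ∈ S, c L * ∏ i, (a i * t ^ m i) ^ L i) ≠ 0) ↔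
      ∃ v₀ ∈ V, ∀ v ∈ V, v ≠ v₀ → g v = 0 := by
    rw [← laurent_one_var V g (hsum ▸ hP)]
    constructor
    · intro h t ht; rw [← hre t ht]; exact h t ht
    · intro h t ht; rw [hre t ht]; exact h t ht
  rw [key]
  -- now convert values to fibers
  have hfib_inj : ∀ v ∈ V, ∀ w ∈ V, fiber S m v = fiber S m w → v = w := by
    intro v hv w hw hvw
    rw [hV, Finset.mem_image] at hv
    obtain ⟨L, hL, rfl⟩ := hv
    have h1 : L ∈ fiber S m (dotm m L) := Finset.mem_filter.2 ⟨hL, rfl⟩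
    rw [hvw] at h1
    exact ((Finset.mem_filter.1 h1).2).symm ▸ rfl
  have hgev : ∀ v, g v = ev a ha (blockPoly c (fiber S m v)) := by
    intro v; rw [ev_blockPoly]
  constructor
  · rintro ⟨v₀, hv₀, h⟩
    refine ⟨fiber S m v₀, Finset.mem_image_of_mem _ hv₀, ?_⟩
    rintro B' hB' hne
    rw [fibers, Finset.mem_image] at hB'
    obtain ⟨v, hv, rfl⟩ := hB'
    rw [← hgev]
    exact h v hv (fun hvv => hne (hvv ▸ rfl))
  · rintro ⟨B, hB, h⟩
    rw [fibers, Finset.mem_image] at hB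
    obtain ⟨v₀, hv₀, rfl⟩ := hB
    refine ⟨v₀, hv₀, fun v hv hne => ?_⟩
    rw [hgev]
    exact h _ (Finset.mem_image_of_mem _ hv) (fun hh => hne (hfib_inj v hv v₀ hv₀ hh))
end

noncomputable section
variable {n : ℕ}

lemma or_forall_iff {α β : Type*} (s : List α) (G : Finset β)
    (R : α → Prop) (T : β → Prop) :
    ((∀ q ∈ s, R q) ∨ (∀ B ∈ G, T B)) ↔ ∀ q ∈ s, ∀ B ∈ G, (R q ∨ T B) := by
  classical
  constructor
  · rintro (h | h) q hq B hB
    · exact Or.inl (h q hq)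
    · exact Or.inr (h B hB)
  · intro h
    by_cases hT : ∀ B ∈ G, T B
    · exact Or.inr hT
    · push_neg at hT
      obtain ⟨B₀, hB₀, hT0⟩ := hT
      refine Or.inl fun q hq => ?_
      rcases h q hq B₀ hB₀ with h' | h'
      · exact h'
      · exact absurd h' hT0

lemma fold_lemma (S : Finset (Fin n → ℤ)) (c : (Fin n → ℤ) → ℂ)
    (hc : ∀ L ∈ S, c L ≠ 0) :
    ∀ (Js : List (Finset (Finset (Fin n → ℤ)))),
      (∀ G ∈ Js, ∀ B ∈ G, B.Nonempty ∧ B ⊆ S) →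
      ∃ qs : List (LPoly n), (∀ q ∈ qs, q ≠ 0) ∧
        ∀ (a : Fin n → ℂ) (ha : ∀ i, a i ≠ 0),
          ((∃ G ∈ Js, ∀ B ∈ G, ev a ha (blockPoly c B) = 0) ↔
            ∀ q ∈ qs, ev a ha q = 0) := by
  classical
  intro Js
  induction Js with
  | nil =>
    intro _
    refine ⟨[(1 : LPoly n)], ?_, ?_⟩
    · intro q hq
      rw [List.mem_singleton] at hq
      subst hq; exact one_ne_zero
    · intro a ha
      simp
  | cons G Js ih =>
    intro hblocks
    obtain ⟨qs, hqs0, hqsiff⟩ := ih (fun G' hG' => hblocks G' (List.mem_cons_of_mem _ hG'))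
    have hGblocks := hblocks G List.mem_cons_self
    by_cases hG : G = ∅
    · subst hG
      refine ⟨[], fun q hq => absurd hq List.not_mem_nil, fun a ha => ?_⟩
      simp only [List.not_mem_nil, false_implies, implies_true, iff_true]
      exact ⟨∅, List.mem_cons_self, by simp⟩
    · refine ⟨qs.flatMap (fun q => G.toList.map (fun B => q * blockPoly c B)), ?_, ?_⟩
      · intro q' hq'
        rw [List.mem_flatMap] at hq'
        obtain ⟨q, hq, hq'⟩ := hq'
        rw [List.mem_map] at hq'
        obtain ⟨B, hB, rfl⟩ := hq'
        rw [Finset.mem_toList] at hB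
        exact mul_ne_zero (hqs0 q hq)
          (blockPoly_ne_zero c B (hGblocks B hB).1
            (fun L hL => hc L ((hGblocks B hB).2 hL)))
      · intro a ha
        rw [List.exists_mem_cons_iff]
        have step1 : ((∀ B ∈ G, ev a ha (blockPoly c B) = 0) ∨
            ∃ G' ∈ Js, ∀ B ∈ G', ev a ha (blockPoly c B) = 0) ↔
            ((∀ q ∈ qs, ev a ha q = 0) ∨ (∀ B ∈ G, ev a ha (blockPoly c B) = 0)) := by
          rw [hqsiff a ha, or_comm]
        rw [step1, or_forall_iff]
        constructor
        · intro h q' hq'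
          rw [List.mem_flatMap] at hq'
          obtain ⟨q, hq, hq'⟩ := hq'
          rw [List.mem_map] at hq'
          obtain ⟨B, hB, rfl⟩ := hq'
          rw [Finset.mem_toList] at hB
          rw [map_mul]
          rcases h q hq B hB with h' | h'
          · rw [h', zero_mul]
          · rw [h', mul_zero]
        · intro h q hq B hB
          have : q * blockPoly c B ∈ qs.flatMap (fun q => G.toList.map (fun B => q * blockPoly c B)) := by
            rw [List.mem_flatMap]
            exact ⟨q, hq, List.mem_map.2 ⟨B, Finset.mem_toList.2 hB, rfl⟩⟩
          have h0 := h _ this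
          rw [map_mul] at h0
          exact mul_eq_zero.1 h0
end

/-- Theorem (3.1) for algebraic tori: the exceptional set `E` — the union of all
translates of positive-dimensional subtori of `(ℂ∖{0})ⁿ` avoiding the zero set `D` of
the Laurent polynomial `P` — is an algebraic subset of the complement of `D`: it is
cut out there by the simultaneous vanishing of finitely many Laurent polynomials. -/
theorem exceptional_set_torus_algebraic
    (n : ℕ) (hn : 1 ≤ n)
    (S : Finset (Fin n → ℤ)) (hS : S.Nonempty)
    (c : (Fin n → ℤ) → ℂ) (hc : ∀ L ∈ S, c L ≠ 0) :
    ∃ (r : ℕ) (T : Fin r → Finset (Fin n → ℤ)) (d : Fin r → (Fin n → ℤ) → ℂ),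
      (∀ k : Fin r, (T k).Nonempty ∧ ∀ L ∈ T k, d k L ≠ 0) ∧
      ∀ a : Fin n → ℂ, (∀ i, a i ≠ 0) →
        (((∑ L ∈ S, c L * ∏ i, a i ^ L i) ≠ 0 ∧
          ∃ m : Fin n → ℤ, m ≠ 0 ∧ ∀ t : ℂ, t ≠ 0 →
            (∑ L ∈ S, c L * ∏ i, (a i * t ^ m i) ^ L i) ≠ 0)
        ↔ ((∑ L ∈ S, c L * ∏ i, a i ^ L i) ≠ 0 ∧
          ∀ k : Fin r, (∑ L ∈ T k, d k L * ∏ i, a i ^ L i) = 0)) := by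
  classical
  set PP : Finset (Finset (Finset (Fin n → ℤ))) :=
    (S.powerset.powerset).filter
      (fun F => ∃ m : Fin n → ℤ, m ≠ 0 ∧ F = fibers S m) with hPP
  set J : Finset (Finset (Finset (Fin n → ℤ))) :=
    PP.biUnion (fun F => F.image (fun B => F.erase B)) with hJ
  have hJblocks : ∀ G ∈ J.toList, ∀ B ∈ G, B.Nonempty ∧ B ⊆ S := by
    intro G hG B hB
    rw [Finset.mem_toList, hJ, Finset.mem_biUnion] at hG
    obtain ⟨F, hF, hGF⟩ := hG
    rw [Finset.mem_image] at hGF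
    obtain ⟨B₀, hB₀, rfl⟩ := hGF
    rw [hPP, Finset.mem_filter] at hF
    obtain ⟨-, m, hm, rfl⟩ := hF
    exact fibers_sub_nonempty S m B (Finset.mem_of_mem_erase hB)
  obtain ⟨qs, hqs0, hqsiff⟩ := fold_lemma S c hc J.toList hJblocks
  refine ⟨qs.length, fun k => (qs.get k).coeff.support, fun k => fun L => (qs.get k).coeff L, ?_, ?_⟩
  · intro k
    refine ⟨Finsupp.support_nonempty_iff.2 (mt AddMonoidAlgebra.coeff_eq_zero.1 (hqs0 _ (List.get_mem qs k))), ?_⟩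
    intro L hL
    exact Finsupp.mem_support_iff.1 hL
  · intro a ha
    refine and_congr_right fun hP => ?_
    have main : (∃ m : Fin n → ℤ, m ≠ 0 ∧ ∀ t : ℂ, t ≠ 0 →
        (∑ L ∈ S, c L * ∏ i, (a i * t ^ m i) ^ L i) ≠ 0) ↔
        ∃ G ∈ J.toList, ∀ B ∈ G, ev a ha (blockPoly c B) = 0 := by
      constructor
      · rintro ⟨m, hm, hC⟩
        obtain ⟨B, hB, hall⟩ := (lemA S c a ha hP m).1 hC
        have hFPP : fibers S m ∈ PP := by
          rw [hPP, Finset.mem_filter]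
          refine ⟨Finset.mem_powerset.2 ?_, m, hm, rfl⟩
          intro B' hB'
          exact Finset.mem_powerset.2 (fibers_sub_nonempty S m B' hB').2
        refine ⟨(fibers S m).erase B, ?_, ?_⟩
        · rw [Finset.mem_toList, hJ, Finset.mem_biUnion]
          exact ⟨fibers S m, hFPP, Finset.mem_image.2 ⟨B, hB, rfl⟩⟩
        · intro B' hB'
          obtain ⟨hne, hmem⟩ := Finset.mem_erase.1 hB'
          exact hall B' hmem hne
      · rintro ⟨G, hG, hall⟩
        rw [Finset.mem_toList, hJ, Finset.mem_biUnion] at hG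
        obtain ⟨F, hF, hGF⟩ := hG
        rw [Finset.mem_image] at hGF
        obtain ⟨B, hB, rfl⟩ := hGF
        rw [hPP, Finset.mem_filter] at hF
        obtain ⟨-, m, hm, rfl⟩ := hF
        refine ⟨m, hm, (lemA S c a ha hP m).2 ⟨B, hB, ?_⟩⟩
        intro B' hB' hne
        exact hall B' (Finset.mem_erase.2 ⟨hne, hB'⟩)
    rw [main, hqsiff a ha]
    have evget : ∀ k : Fin qs.length,
        ev a ha (qs.get k) = ∑ L ∈ (qs.get k).coeff.support, (qs.get k).coeff L * ∏ i, a i ^ L i :=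
      fun k => ev_apply a ha _
    constructor
    · intro h k
      rw [← evget k]
      exact h _ (List.get_mem qs k)
    · intro h q hq
      obtain ⟨k, rfl⟩ := List.mem_iff_get.1 hq
      rw [evget k]
      exact h k
end

section
/- Theorem (3.1) for Abelian varieties, topological consequence: Let Λ ⊆ ℂⁿ be a lattice admitting a Riemann form and let θ be a theta function for Λ. Define E = { x ∈ ℂⁿ : θ(x) ≠ 0 and there exists a Λ-rational complex linear subspace W ⊆ ℂⁿ with dim_ℂ W ≥ 1 such that θ(x+w) ≠ 0 for all w ∈ W } (the preimage in ℂⁿ of the union of all translates of positive-dimensional Abelian subvarieties of ℂⁿ/Λ avoiding the divisor of θ). Then E is a closed subset of the open set { x ∈ ℂⁿ : θ(x) ≠ 0 } in its subspace topology. -/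
open Complex Bornology Set

/-- Key abstract lemma: if `G` is an entire function on a finite-dimensional complex
space with `G 0 ≠ 0`, satisfying `G (w + γ) * G 0 = G γ * G w` for all `γ` in an additive
subgroup `S` whose real span is everything, then `G` is nowhere zero. -/
theorem aux_nowhere_zero {E : Type*} [NormedAddCommGroup E] [NormedSpace ℂ E]
    [FiniteDimensional ℂ E]
    (S : AddSubgroup E) (hS : Submodule.span ℝ (S : Set E) = ⊤)
    (G : E → ℂ) (hG : Differentiable ℂ G) (hG0 : G 0 ≠ 0)
    (hGeq : ∀ γ ∈ S, ∀ w : E, G (w + γ) * G 0 = G γ * G w) :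
    ∀ w : E, G w ≠ 0 := by
  classical
  haveI : FiniteDimensional ℝ E := Module.Finite.trans ℂ E
  -- nonvanishing on S
  have hSne : ∀ γ ∈ S, G γ ≠ 0 := by
    intro γ hγ h0
    apply hG0
    have h1 : G ((-γ) + γ) * G 0 = G γ * G (-γ) := hGeq γ hγ (-γ)
    rw [h0, zero_mul, neg_add_cancel] at h1
    rcases mul_eq_zero.1 h1 with h | h
    · exact h
    · exact h
  set ρ : E → ℝ := fun γ => Real.log ‖G γ‖ - Real.log ‖G 0‖ with hρdef
  have hnz : ∀ γ ∈ S, ‖G γ‖ ≠ 0 := fun γ hγ => norm_ne_zero_iff.2 (hSne γ hγ)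
  have hG0n : ‖G 0‖ ≠ 0 := norm_ne_zero_iff.2 hG0
  have hρadd : ∀ γ ∈ S, ∀ δ ∈ S, ρ (γ + δ) = ρ γ + ρ δ := by
    intro γ hγ δ hδ
    have h1 : G (δ + γ) * G 0 = G γ * G δ := hGeq γ hγ δ
    rw [add_comm δ γ] at h1
    have h2 : ‖G (γ + δ)‖ * ‖G 0‖ = ‖G γ‖ * ‖G δ‖ := by
      rw [← norm_mul, ← norm_mul, h1]
    have h3 : Real.log (‖G (γ + δ)‖ * ‖G 0‖) = Real.log (‖G γ‖ * ‖G δ‖) := by rw [h2]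
    rw [Real.log_mul (hnz _ (add_mem hγ hδ)) hG0n, Real.log_mul (hnz _ hγ) (hnz _ hδ)] at h3
    simp only [hρdef]
    linarith
  have hρ0 : ρ 0 = 0 := by simp [hρdef]
  have hρneg : ∀ γ ∈ S, ρ (-γ) = - ρ γ := by
    intro γ hγ
    have := hρadd γ hγ (-γ) (neg_mem hγ)
    rw [add_neg_cancel, hρ0] at this
    linarith
  -- basis from S
  obtain ⟨s, hsub, hsp, hli⟩ := exists_linearIndependent ℝ (S : Set E)
  have hstop : Submodule.span ℝ s = ⊤ := by rw [hsp, hS]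
  haveI : Fintype s := (hli.setFinite).fintype
  let b : Module.Basis s ℝ E := Module.Basis.mk hli (by rw [Subtype.range_coe]; rw [hstop])
  have hbs : Set.range ⇑b = s := by rw [Module.Basis.coe_mk, Subtype.range_coe]
  -- linear extension of ρ
  let ρ' : E →ₗ[ℝ] ℝ := b.constr ℝ (fun i => ρ (i : E))
  -- ρ' agrees with ρ on the ℤ-span of b
  have hρz : ∀ (z : ℤ), ∀ x ∈ S, ρ (z • x) = z * ρ x := by
    have hn : ∀ (k : ℕ), ∀ x ∈ S, ρ (k • x) = k * ρ x := by
      intro k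
      induction k with
      | zero => intro x hx; simpa using hρ0
      | succ m ih =>
        intro x hx
        rw [succ_nsmul, hρadd _ (nsmul_mem hx m) _ hx, ih x hx]
        push_cast; ring
    intro z x hx
    rcases z with k | k
    · simpa using hn k x hx
    · rw [negSucc_zsmul, hρneg _ (nsmul_mem hx (k + 1)), hn (k + 1) x hx]
      push_cast; ring
  have hlat : ∀ γ ∈ Submodule.span ℤ (Set.range ⇑b), γ ∈ S ∧ ρ' γ = ρ γ := by
    intro γ hγ
    induction hγ using Submodule.span_induction with
    | mem x hx =>
      rw [hbs] at hx
      constructor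
      · exact hsub hx
      · have : ρ' (b ⟨x, hx⟩) = ρ ((⟨x, hx⟩ : s) : E) := b.constr_basis ℝ _ _
        rwa [Module.Basis.mk_apply] at this
    | zero => exact ⟨zero_mem S, by rw [map_zero, hρ0]⟩
    | add x y hx hy ihx ihy =>
      exact ⟨add_mem ihx.1 ihy.1, by rw [map_add, ihx.2, ihy.2, hρadd _ ihx.1 _ ihy.1]⟩
    | smul z x hx ih =>
      refine ⟨zsmul_mem ih.1 z, ?_⟩
      rw [map_zsmul, ih.2, hρz z x ih.1]
      simp
  -- complex-linear extension
  let μ : E →ₗ[ℂ] ℂ := LinearMap.extendTo𝕜' ρ'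
  have hμre : ∀ w : E, (μ w).re = ρ' w := by
    intro w
    have h := LinearMap.extendTo𝕜'_apply (𝕜 := ℂ) ρ' w
    rw [show (RCLike.I : ℂ) = Complex.I by simp] at h
    rw [show μ w = Module.Dual.extendRCLike ρ' w from rfl, h]
    simp
  have hμdiff : Differentiable ℂ (fun w : E => μ w) :=
    (LinearMap.toContinuousLinearMap μ).differentiable
  set H : E → ℂ := fun w => G w * Complex.exp (-(μ w)) with hHdef
  have hH : Differentiable ℂ H := hG.mul (hμdiff.neg.cexp)
  have habs : ∀ u : E, ‖H u‖ = ‖G u‖ * Real.exp (-(ρ' u)) := by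
    intro u
    rw [hHdef]
    simp only [norm_mul, Complex.norm_exp, neg_re, hμre]
  have hHnorm : ∀ γ, γ ∈ S → ρ' γ = ρ γ → ∀ w : E, ‖H (w + γ)‖ = ‖H w‖ := by
    intro γ hγS hγρ w
    have hpos : (0:ℝ) < ‖G γ‖ := norm_pos_iff.2 (hSne γ hγS)
    have hpos0 : (0:ℝ) < ‖G 0‖ := norm_pos_iff.2 hG0
    have hGwγ : G (w + γ) = G γ * G w / G 0 := by
      rw [eq_div_iff hG0]; exact hGeq γ hγS w
    rw [habs, habs, hGwγ, map_add, hγρ]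
    simp only [hρdef]
    rw [norm_div, norm_mul]
    rw [show -(ρ' w + (Real.log ‖G γ‖ - Real.log ‖G 0‖))
        = (-(ρ' w)) + (Real.log ‖G 0‖ - Real.log ‖G γ‖) by ring,
      Real.exp_add, Real.exp_sub, Real.exp_log hpos0, Real.exp_log hpos]
    have ha1 : ‖G γ‖ ≠ 0 := by simpa using hpos.ne'
    have ha0 : ‖G 0‖ ≠ 0 := by simpa using hpos0.ne'
    field_simp
  -- boundedness via fundamental domain
  have hKcpt : IsCompact (closure (ZSpan.fundamentalDomain b)) :=
    (ZSpan.fundamentalDomain_isBounded b).isCompact_closure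
  obtain ⟨C, hC⟩ := hKcpt.exists_bound_of_continuousOn (hH.continuous.continuousOn (s := _))
  have hbd : ∀ w : E, ‖H w‖ ≤ C := by
    intro w
    have hfl := (ZSpan.floor b w).2
    obtain ⟨hmemS, hρ'⟩ := hlat _ hfl
    have hw : ZSpan.fract b w + (ZSpan.floor b w : E) = w := by
      rw [ZSpan.fract_apply]; abel
    calc ‖H w‖ = ‖H (ZSpan.fract b w + (ZSpan.floor b w : E))‖ := by rw [hw]
      _ = ‖H (ZSpan.fract b w)‖ := hHnorm _ hmemS hρ' _
      _ ≤ C := hC _ (subset_closure (ZSpan.fract_mem_fundamentalDomain b w))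
  have hbdd : IsBounded (Set.range H) := by
    rw [isBounded_iff_forall_norm_le]
    exact ⟨C, by rintro y ⟨w, rfl⟩; exact hbd w⟩
  have hconst : ∀ w : E, H w = H 0 := fun w => hH.apply_eq_apply_of_bounded hbdd w 0
  have hH0 : H 0 = G 0 := by
    rw [hHdef]; simp
  intro w
  have hHw : H w ≠ 0 := by rw [hconst w, hH0]; exact hG0
  intro hGw
  apply hHw
  rw [hHdef]
  simp only [hGw, zero_mul]

theorem aux_translate {n : ℕ} (Λ : AddSubgroup (Fin n → ℂ)) (θ : (Fin n → ℂ) → ℂ)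
    (hθd : Differentiable ℂ θ)
    (hfe : ∀ γ ∈ Λ, ∃ (a : (Fin n → ℂ) →ₗ[ℂ] ℂ) (b : ℂ),
      ∀ x : Fin n → ℂ, θ (x + γ) = Complex.exp (a x + b) * θ x)
    (W : Submodule ℂ (Fin n → ℂ))
    (hW : Submodule.span ℝ ((Λ : Set (Fin n → ℂ)) ∩ (W : Set (Fin n → ℂ)))
      = W.restrictScalars ℝ)
    (x₀ : Fin n → ℂ) (h₀ : ∀ w ∈ W, θ (x₀ + w) ≠ 0)
    (x : Fin n → ℂ) (hx : θ x ≠ 0) : ∀ w ∈ W, θ (x + w) ≠ 0 := by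
  classical
  choose a bb hab using hfe
  set S : AddSubgroup ↥W := AddSubgroup.comap (W.subtype.toAddMonoidHom) Λ with hSdef
  -- the span condition for S
  have hSspan : Submodule.span ℝ (S : Set ↥W) = ⊤ := by
    rw [eq_top_iff]
    rintro w -
    set j : ↥W →ₗ[ℝ] (Fin n → ℂ) := W.subtype.restrictScalars ℝ with hjdef
    have hw : (w : Fin n → ℂ) ∈
        Submodule.span ℝ ((Λ : Set (Fin n → ℂ)) ∩ (W : Set (Fin n → ℂ))) := by
      rw [hW]
      exact w.2
    have himg : j '' (S : Set ↥W) = (Λ : Set (Fin n → ℂ)) ∩ (W : Set (Fin n → ℂ)) := by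
      ext v
      constructor
      · rintro ⟨u, huS, rfl⟩
        exact ⟨huS, u.2⟩
      · rintro ⟨hvΛ, hvW⟩
        exact ⟨⟨v, hvW⟩, hvΛ, rfl⟩
    have hw2 : (w : Fin n → ℂ) ∈
        Submodule.map j (Submodule.span ℝ (S : Set ↥W)) := by
      rw [Submodule.map_span, himg]
      exact hw
    obtain ⟨u, hu, huw⟩ := hw2
    have : u = w := Subtype.ext huw
    exact this ▸ hu
  have hne : ∀ w : ↥W, θ (x₀ + (w : Fin n → ℂ)) ≠ 0 := fun w => h₀ _ w.2
  have hne0 : θ x₀ ≠ 0 := by simpa using hne 0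
  set G : ↥W → ℂ := fun w => θ (x + (w : Fin n → ℂ)) / θ (x₀ + (w : Fin n → ℂ)) with hGdef
  have hGd : Differentiable ℂ G := by
    have hd1 : Differentiable ℂ (fun w : ↥W => θ (x + (w : Fin n → ℂ))) :=
      hθd.comp ((W.subtypeL.differentiable).const_add x)
    have hd2 : Differentiable ℂ (fun w : ↥W => θ (x₀ + (w : Fin n → ℂ))) :=
      hθd.comp ((W.subtypeL.differentiable).const_add x₀)
    have hGm : G = fun w : ↥W => θ (x + (w : Fin n → ℂ)) * (θ (x₀ + (w : Fin n → ℂ)))⁻¹ :=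
      funext fun w => div_eq_mul_inv _ _
    rw [hGm]
    exact hd1.mul (Differentiable.inv hd2 hne)
  have hG0 : G 0 ≠ 0 := by
    simp only [hGdef, ZeroMemClass.coe_zero, add_zero]
    exact div_ne_zero hx hne0
  have key : ∀ γ : ↥W, ∀ hγ : (γ : Fin n → ℂ) ∈ Λ, ∀ w : ↥W,
      G (w + γ) = Complex.exp (a (γ : Fin n → ℂ) hγ x - a (γ : Fin n → ℂ) hγ x₀) * G w := by
    intro γ hγ w
    have hcoe : ((w + γ : ↥W) : Fin n → ℂ) = (w : Fin n → ℂ) + (γ : Fin n → ℂ) := rfl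
    have h1 : x + ((w : Fin n → ℂ) + (γ : Fin n → ℂ)) = (x + (w : Fin n → ℂ)) + γ := by
      rw [add_assoc]
    have h2 : x₀ + ((w : Fin n → ℂ) + (γ : Fin n → ℂ)) = (x₀ + (w : Fin n → ℂ)) + γ := by
      rw [add_assoc]
    rw [hGdef]
    simp only [hcoe]
    rw [h1, h2, hab _ hγ (x + (w : Fin n → ℂ)), hab _ hγ (x₀ + (w : Fin n → ℂ)),
      ← div_mul_div_comm, ← Complex.exp_sub]
    congr 2
    rw [map_add, map_add]
    ring
  have hGeq : ∀ γ ∈ S, ∀ w : ↥W, G (w + γ) * G 0 = G γ * G w := by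
    intro γ hγ w
    have hγ' : (γ : Fin n → ℂ) ∈ Λ := hγ
    rw [key γ hγ' w]
    conv_rhs => rw [show γ = 0 + γ from (zero_add γ).symm, key γ hγ' 0]
    ring
  have hnz := aux_nowhere_zero S hSspan G hGd hG0 hGeq
  intro w hw h0
  apply hnz ⟨w, hw⟩
  rw [hGdef]
  simp only
  rw [h0, zero_div]




/-- `H` is a Riemann form for the lattice `Λ ⊆ ℂⁿ`: a positive-definite Hermitian form
(ℂ-linear in the first variable, conjugate-symmetric) whose imaginary part is
integer-valued on `Λ × Λ`. -/
def IsRiemannForm (n : ℕ) (Λ : AddSubgroup (Fin n → ℂ))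
    (H : (Fin n → ℂ) → (Fin n → ℂ) → ℂ) : Prop :=
  (∀ y : Fin n → ℂ, IsLinearMap ℂ fun x => H x y) ∧
  (∀ x y : Fin n → ℂ, H y x = starRingEnd ℂ (H x y)) ∧
  (∀ x : Fin n → ℂ, x ≠ 0 → 0 < (H x x).re) ∧
  (∀ γ ∈ Λ, ∀ γ' ∈ Λ, ∃ k : ℤ, (H γ γ').im = (k : ℝ))

/-- `θ` is a theta function for the lattice `Λ`: an entire function, not identically
zero, transforming under translation by each lattice vector `γ` by the exponential of
an affine-linear factor. -/
def IsThetaFunction (n : ℕ) (Λ : AddSubgroup (Fin n → ℂ))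
    (θ : (Fin n → ℂ) → ℂ) : Prop :=
  Differentiable ℂ θ ∧ (∃ x, θ x ≠ 0) ∧
  ∀ γ ∈ Λ, ∃ (a : (Fin n → ℂ) →ₗ[ℂ] ℂ) (b : ℂ),
    ∀ x : Fin n → ℂ, θ (x + γ) = Complex.exp (a x + b) * θ x

/-- A complex linear subspace `W ⊆ ℂⁿ` is `Λ`-rational if `Λ ∩ W` spans `W` over `ℝ`. -/
def IsLatticeRational (n : ℕ) (Λ : AddSubgroup (Fin n → ℂ))
    (W : Submodule ℂ (Fin n → ℂ)) : Prop :=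
  Submodule.span ℝ ((Λ : Set (Fin n → ℂ)) ∩ (W : Set (Fin n → ℂ))) =
    W.restrictScalars ℝ

/-- Theorem (3.1) for Abelian varieties, topological consequence: the exceptional set
`E` — the preimage in `ℂⁿ` of the union of all translates of positive-dimensional
Abelian subvarieties of `ℂⁿ/Λ` avoiding the divisor of `θ` — is closed in the open
set `{θ ≠ 0}` with its subspace topology. -/
theorem exceptional_set_abelian_closed
    (n : ℕ) (hn : 1 ≤ n)
    (Λ : AddSubgroup (Fin n → ℂ))
    (hdisc : DiscreteTopology Λ)
    (hspan : Submodule.span ℝ (Λ : Set (Fin n → ℂ)) = ⊤)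
    (hRiemann : ∃ H, IsRiemannForm n Λ H)
    (θ : (Fin n → ℂ) → ℂ) (hθ : IsThetaFunction n Λ θ) :
    IsClosed {x : {x : Fin n → ℂ // θ x ≠ 0} |
      ∃ W : Submodule ℂ (Fin n → ℂ), IsLatticeRational n Λ W ∧ 1 ≤ Module.finrank ℂ W ∧
        ∀ w ∈ W, θ ((x : Fin n → ℂ) + w) ≠ 0} := by
  obtain ⟨hθd, -, hθfe⟩ := hθ
  by_cases hE : ∃ x₀ : Fin n → ℂ, θ x₀ ≠ 0 ∧ ∃ W : Submodule ℂ (Fin n → ℂ),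
      IsLatticeRational n Λ W ∧ 1 ≤ Module.finrank ℂ W ∧ ∀ w ∈ W, θ (x₀ + w) ≠ 0
  · obtain ⟨x₀, hx₀, W₀, hrat, hrank, h₀⟩ := hE
    have heq : {x : {x : Fin n → ℂ // θ x ≠ 0} |
        ∃ W : Submodule ℂ (Fin n → ℂ), IsLatticeRational n Λ W ∧ 1 ≤ Module.finrank ℂ W ∧
          ∀ w ∈ W, θ ((x : Fin n → ℂ) + w) ≠ 0} = Set.univ := by
      rw [Set.eq_univ_iff_forall]
      intro x
      exact ⟨W₀, hrat, hrank,
        fun w hw => aux_translate Λ θ hθd hθfe W₀ hrat x₀ h₀ x x.2 w hw⟩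
    rw [heq]
    exact isClosed_univ
  · have heq : {x : {x : Fin n → ℂ // θ x ≠ 0} |
        ∃ W : Submodule ℂ (Fin n → ℂ), IsLatticeRational n Λ W ∧ 1 ≤ Module.finrank ℂ W ∧
          ∀ w ∈ W, θ ((x : Fin n → ℂ) + w) ≠ 0} = ∅ := by
      rw [Set.eq_empty_iff_forall_notMem]
      rintro x ⟨W₀, hrat, hrank, hall⟩
      exact hE ⟨x, x.2, W₀, hrat, hrank, hall⟩
    rw [heq]
    exact isClosed_empty
end
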